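/- arXiv:2312.03380 — 3 statements merged into one kernel-verified Lean document; each statement's English description precedes it below -/
import Mathlib

section
/- (Ostrowski) Every absolute value m on the field ℚ of rational numbers is either the trivial absolute value, a power |·|^ρ (0 < ρ ≤ 1 suffices for being an absolute value, but any positive power of the archimedean one arising this way) of the usual absolute value, or a positive power of a p-adic absolute value for some prime p. -/
/-!
A nontrivial absolute value on ℚ is equivalent to the real or to a `p`-adic one
(`Rat.AbsoluteValue.equiv_real_or_padic`), and equivalent absolute values on a field are
positive real powers of each other.
-/

theorem map_ne_zero_of_map_mul {G₀ : Type*} [GroupWithZero G₀] {m : G₀ → ℝ} (h_one : m 1 = 1)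
    (h_mul : ∀ a b, m (a * b) = m a * m b) {a : G₀} (ha : a ≠ 0) : m a ≠ 0 := by
  intro hma
  have h := h_mul a a⁻¹
  rw [mul_inv_cancel₀ ha, h_one, hma, zero_mul] at h
  exact one_ne_zero h

namespace AbsoluteValue

def ofMap {K : Type*} [DivisionSemiring K] (m : K → ℝ) (h_nonneg : ∀ a, 0 ≤ m a)
    (h_zero : m 0 = 0) (h_one : m 1 = 1) (h_mul : ∀ a b, m (a * b) = m a * m b)
    (h_add : ∀ a b, m (a + b) ≤ m a + m b) : AbsoluteValue K ℝ where
  toFun := m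
  map_mul' := h_mul
  nonneg' := h_nonneg
  eq_zero' _ := ⟨not_imp_not.1 (map_ne_zero_of_map_mul h_one h_mul), fun h ↦ h ▸ h_zero⟩
  add_le' := h_add

theorem exists_rpow_eq_of_isEquiv {F : Type*} [Field F] {v w : AbsoluteValue F ℝ}
    (h : v.IsEquiv w) : ∃ ρ : ℝ, 0 < ρ ∧ ∀ a, v a = w a ^ ρ := by
  obtain ⟨ρ, hρ, hwv⟩ := isEquiv_iff_exists_rpow_eq.1 h.symm
  exact ⟨ρ, hρ, fun a ↦ (congrFun hwv a).symm⟩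

end AbsoluteValue

open Rat.AbsoluteValue in
/-- Ostrowski's theorem: every absolute value on ℚ is trivial, a positive
power of the usual absolute value, or a positive power of a p-adic
absolute value. -/
theorem ostrowski_rat (m : ℚ → ℝ)
    (h_nonneg : ∀ a, 0 ≤ m a)
    (h_zero : m 0 = 0) (h_one : m 1 = 1)
    (h_mul : ∀ a b, m (a * b) = m a * m b)
    (h_add : ∀ a b, m (a + b) ≤ m a + m b) :
    (∀ a : ℚ, a ≠ 0 → m a = 1) ∨
    (∃ ρ : ℝ, 0 < ρ ∧ ∀ a : ℚ, m a = |(a : ℝ)| ^ ρ) ∨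
    (∃ p : ℕ, p.Prime ∧ ∃ ρ : ℝ, 0 < ρ ∧ ∀ a : ℚ, m a = (padicNorm p a : ℝ) ^ ρ) := by
  set v := AbsoluteValue.ofMap m h_nonneg h_zero h_one h_mul h_add
  by_cases hv : v.IsNontrivial
  swap
  · exact Or.inl (v.not_isNontrivial_iff.1 hv)
  rcases equiv_real_or_padic v hv with h | ⟨p, ⟨hp, h⟩, -⟩
  · obtain ⟨ρ, hρ, hvρ⟩ := AbsoluteValue.exists_rpow_eq_of_isEquiv h
    refine Or.inr (Or.inl ⟨ρ, hρ, fun a ↦ ?_⟩)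
    rw [← Rat.cast_abs, ← real_eq_abs]
    exact hvρ a
  · obtain ⟨ρ, hρ, hvρ⟩ := AbsoluteValue.exists_rpow_eq_of_isEquiv h
    exact Or.inr (Or.inr ⟨p, hp.out, ρ, hρ, hvρ⟩)
end

section
/- Let k be a field and m an absolute value on the rational function field k(T) whose restriction to k is trivial. Then m is either trivial, a power of the degree absolute value m_∞(f) = e^{deg(g)−deg(h)} for f = g/h, or a power of the π-adic absolute value for some irreducible polynomial π ∈ k[T]. -/
/-!
Since `m` is trivial on `k`, it is at most `1` on the image of `ℕ`, which forces it to be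
non-archimedean, i.e. a real-valued valuation. If `m T > 1`, leading terms dominate and
`m f = (m T) ^ deg f`. Otherwise `m ≤ 1` on `k[T]`; if `m` is nontrivial, a polynomial `π` of
minimal degree with `m π < 1` is irreducible, and every polynomial `g` prime to `π` has value `1`:
writing `1 = a π + b g`, the ultrametric inequality forces `m (b g) ≥ 1`. Hence
`m (π ^ n g / h) = (m π) ^ n`.
-/

open Polynomial
open scoped NNReal

namespace AbsoluteValue

def ofField {K : Type*} [Field K] (m : K → ℝ) (nonneg : ∀ x, 0 ≤ m x) (map_zero : m 0 = 0)
    (map_one : m 1 = 1) (map_mul : ∀ x y, m (x * y) = m x * m y)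
    (add_le : ∀ x y, m (x + y) ≤ m x + m y) : AbsoluteValue K ℝ where
  toFun := m
  map_mul' := map_mul
  nonneg' := nonneg
  eq_zero' x := by
    refine ⟨fun hx => by_contra fun h => ?_, fun hx => hx ▸ map_zero⟩
    simpa [hx, h, map_one] using map_mul x x⁻¹
  add_le' := add_le

theorem isNonarchimedean_of_natCast_le_one {K : Type*} [Field K] (v : AbsoluteValue K ℝ)
    (h : ∀ n : ℕ, v n ≤ 1) : IsNonarchimedean v := by
  have : IsUltrametricDist (WithAbs v) :=
    IsUltrametricDist.isUltrametricDist_of_forall_norm_natCast_le_one fun n => h n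
  exact fun x y => IsUltrametricDist.norm_add_le_max (WithAbs.toAbs v x) (WithAbs.toAbs v y)

def toNNValuation {R : Type*} [Ring R] [Nontrivial R] (v : AbsoluteValue R ℝ)
    (hv : IsNonarchimedean v) : Valuation R ℝ≥0 where
  toFun x := ⟨v x, v.nonneg x⟩
  map_zero' := NNReal.eq v.map_zero
  map_one' := NNReal.eq v.map_one
  map_mul' x y := NNReal.eq (v.map_mul x y)
  map_add_le_max' x y := hv x y

end AbsoluteValue

theorem Real.zpow_eq_exp_rpow {c x ρ : ℝ} (hc : 0 < c) {n : ℤ} (h : x * ρ = n * Real.log c) :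
    c ^ n = Real.exp x ^ ρ := by
  rw [← Real.exp_mul, h, ← Real.rpow_intCast, Real.rpow_def_of_pos hc, mul_comm]

namespace RatFunc

variable {K : Type*} [Field K]

section

variable {Γ : Type*} [LinearOrderedCommGroupWithZero Γ] {v : Valuation (RatFunc K) Γ}
  [v.IsTrivialOn K]

theorem valuation_eq_one_of_not_dvd (hX : v X ≤ 1) {π g : K[X]} (hπ : Irreducible π)
    (hπv : v π < 1) (hg : ¬π ∣ g) : v g = 1 := by
  obtain ⟨a, b, hab⟩ := hπ.coprime_iff_not_dvd.2 hg
  have hle := valuation_le_one_of_valuation_X_le_one K hX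
  refine le_antisymm (hle g) (by_contra fun hlt => ?_)
  have hsum : v ↑(a * π + b * g) < 1 := by
    rw [coePolynomial_eq_algebraMap, map_add, map_mul, map_mul]
    refine v.map_add_lt ?_ ?_ <;> rw [v.map_mul]
    exacts [Right.mul_lt_one_of_le_of_lt (hle a) hπv,
      Right.mul_lt_one_of_le_of_lt (hle b) (not_le.1 hlt)]
  simp [hab] at hsum

theorem valuation_eq_zpow_of_eq_mul_div (hX : v X ≤ 1) {π : K[X]} (hπ : Irreducible π)
    (hπv : v π < 1) {f : RatFunc K} {n : ℤ} {g h : K[X]} (hg : ¬π ∣ g) (hh : ¬π ∣ h)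
    (hf : f = algebraMap K[X] (RatFunc K) π ^ n * algebraMap K[X] (RatFunc K) g /
      algebraMap K[X] (RatFunc K) h) : v f = v π ^ n := by
  have hg1 := valuation_eq_one_of_not_dvd hX hπ hπv hg
  have hh1 := valuation_eq_one_of_not_dvd hX hπ hπv hh
  simp only [coePolynomial_eq_algebraMap] at hg1 hh1 ⊢
  rw [hf, map_div₀, map_mul, map_zpow₀, hg1, hh1, mul_one, div_one]

end

variable {v : Valuation (RatFunc K) ℝ≥0} [v.IsTrivialOn K]

theorem exists_valuation_eq_exp_intDegree_rpow (hX : 1 < v X) :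
    ∃ ρ : ℝ, 0 < ρ ∧
      ∀ f : RatFunc K, f ≠ 0 → (v f : ℝ) = Real.exp f.intDegree ^ ρ := by
  refine ⟨Real.log (v X), Real.log_pos hX, fun f hf => ?_⟩
  rw [valuation_eq_valuation_X_zpow_intDegree_of_one_lt_valuation_X hX hf, NNReal.coe_zpow]
  exact Real.zpow_eq_exp_rpow (zero_lt_one.trans hX) rfl

theorem exists_irreducible_valuation_eq_exp_rpow [v.IsNontrivial] (hX : v X ≤ 1) :
    ∃ π : K[X], Irreducible π ∧ ∃ ρ : ℝ, 0 < ρ ∧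
      ∀ (f : RatFunc K) (n : ℤ) (g h : K[X]), ¬π ∣ g → ¬π ∣ h →
        f = algebraMap K[X] (RatFunc K) π ^ n * algebraMap K[X] (RatFunc K) g /
          algebraMap K[X] (RatFunc K) h →
        (v f : ℝ) = Real.exp (-(n * π.natDegree : ℝ)) ^ ρ := by
  set π := uniformizingPolynomial hX
  have hπ : Irreducible π := irreducible_min_polynomial_valuation_lt_one_and_ne_zero _
  have hπv : v π < 1 := valuation_uniformizingPolynomial_lt_one hX
  have hπpos : 0 < (v π : ℝ) := by
    simpa [pos_iff_ne_zero] using uniformizingPolynomial_ne_zero hX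
  have hdeg : 0 < (π.natDegree : ℝ) := Nat.cast_pos.2 hπ.natDegree_pos
  have hρ : 0 < -Real.log (v π) / π.natDegree :=
    div_pos (neg_pos.2 (Real.log_neg hπpos hπv)) hdeg
  refine ⟨π, hπ, _, hρ, fun f n g h hg hh hf => ?_⟩
  rw [valuation_eq_zpow_of_eq_mul_div hX hπ hπv hg hh hf, NNReal.coe_zpow]
  refine Real.zpow_eq_exp_rpow hπpos ?_
  field_simp

end RatFunc

/-- Ostrowski's theorem for k(T): an absolute value on k(T) which is trivial
on k is trivial, a power of the degree absolute value, or a power of a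
π-adic absolute value for some irreducible polynomial π. -/
theorem ostrowski_ratfunc {k : Type*} [Field k] (m : RatFunc k → ℝ)
    (h_nonneg : ∀ f, 0 ≤ m f)
    (h_zero : m 0 = 0) (h_one : m 1 = 1)
    (h_mul : ∀ f g, m (f * g) = m f * m g)
    (h_add : ∀ f g, m (f + g) ≤ m f + m g)
    (h_triv_k : ∀ c : k, c ≠ 0 → m (RatFunc.C c) = 1) :
    (∀ f : RatFunc k, f ≠ 0 → m f = 1) ∨
    (∃ ρ : ℝ, 0 < ρ ∧ ∀ f : RatFunc k, f ≠ 0 →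
      m f = Real.exp (f.intDegree : ℝ) ^ ρ) ∨
    (∃ π : Polynomial k, Irreducible π ∧ ∃ ρ : ℝ, 0 < ρ ∧
      ∀ (f : RatFunc k) (n : ℤ) (g h : Polynomial k),
        g ≠ 0 → h ≠ 0 → ¬ π ∣ g → ¬ π ∣ h →
        f = (algebraMap (Polynomial k) (RatFunc k) π) ^ n *
              algebraMap (Polynomial k) (RatFunc k) g /
              algebraMap (Polynomial k) (RatFunc k) h →
        m f = Real.exp (-(n * π.natDegree : ℝ)) ^ ρ) := by
  let v := AbsoluteValue.ofField m h_nonneg h_zero h_one h_mul h_add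
  have hnat (n : ℕ) : v n ≤ 1 := by
    rw [← map_natCast RatFunc.C]
    rcases eq_or_ne (n : k) 0 with hn | hn
    · simp [hn]
    · exact (h_triv_k _ hn).le
  let w := v.toNNValuation (v.isNonarchimedean_of_natCast_le_one hnat)
  have : w.IsTrivialOn k :=
    ⟨fun c hc => NNReal.eq <| by rw [RatFunc.algebraMap_eq_C]; exact h_triv_k c hc⟩
  rcases lt_or_ge 1 (w RatFunc.X) with hX | hX
  · exact .inr (.inl (RatFunc.exists_valuation_eq_exp_intDegree_rpow hX))
  by_cases hw : w.IsNontrivial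
  · obtain ⟨π, hπ, ρ, hρ, hf⟩ := RatFunc.exists_irreducible_valuation_eq_exp_rpow hX
    exact .inr (.inr ⟨π, hπ, ρ, hρ, fun f n g h _ _ => hf f n g h⟩)
  · rw [Valuation.isNontrivial_iff_exists_unit] at hw
    push Not at hw
    exact .inl fun f hf => congrArg NNReal.toReal (hw (Units.mk0 f hf))
end

section
/- (Strassmann's theorem) Let F be a field complete with respect to an ultrametric absolute value and let R > 0. Every nonzero power series φ = ∑ c_n T^n with coefficients in F such that |c_n| R^n → 0 has only finitely many zeros in the closed ball {a ∈ F : |a| ≤ R}. -/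
open Filter
set_option linter.unusedSectionVars false
set_option maxHeartbeats 1000000

section C
variable {F : Type*} [NormedField F] [CompleteSpace F] [IsUltrametricDist F]

private lemma str_summable {f : ℕ → F} {g : ℕ → ℝ} (hb : ∀ n, ‖f n‖ ≤ g n)
    (hg : Tendsto g atTop (nhds 0)) : Summable f :=
  NonarchimedeanAddGroup.summable_of_tendsto_cofinite_zero
    (by rw [Nat.cofinite_eq_atTop]; exact squeeze_zero_norm hb hg)

private lemma str_exists_max (v : ℕ → ℝ) (hv : ∀ n, 0 ≤ v n)
    (h : Tendsto v atTop (nhds 0)) : ∃ N, ∀ n, v n ≤ v N := by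
  by_cases h0 : ∀ n, v n = 0
  · exact ⟨0, fun n => by rw [h0 n, h0 0]⟩
  push_neg at h0
  obtain ⟨n0, hn0⟩ := h0
  have hpos : 0 < v n0 := (hv n0).lt_of_ne (Ne.symm hn0)
  have hfin : {n | ¬ v n < v n0}.Finite := by
    have := h.eventually (gt_mem_nhds hpos)
    rwa [← Nat.cofinite_eq_atTop, eventually_cofinite] at this
  have hne : n0 ∈ hfin.toFinset := by simp
  obtain ⟨N, hN, hNmax⟩ := hfin.toFinset.exists_max_image v ⟨n0, hne⟩
  refine ⟨N, fun n => ?_⟩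
  by_cases hn : v n < v n0
  · exact hn.le.trans (hNmax n0 hne)
  · exact hNmax n (by simpa using hn)

private lemma str_exists_dom (R : ℝ) (hR : 0 < R) (c : ℕ → F)
    (h_conv : Tendsto (fun n => ‖c n‖ * R ^ n) atTop (nhds 0))
    (h_ne : ∃ n, c n ≠ 0) :
    ∃ N, c N ≠ 0 ∧ (∀ n, ‖c n‖ * R ^ n ≤ ‖c N‖ * R ^ N) ∧
      (∀ n, N < n → ‖c n‖ * R ^ n < ‖c N‖ * R ^ N) := by
  set v : ℕ → ℝ := fun n => ‖c n‖ * R ^ n with hvdef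
  obtain ⟨N0, hN0⟩ := str_exists_max v
    (fun n => mul_nonneg (norm_nonneg _) (pow_pos hR n).le) h_conv
  obtain ⟨n0, hn0⟩ := h_ne
  have hpos : 0 < v N0 :=
    lt_of_lt_of_le (mul_pos (norm_pos_iff.2 hn0) (pow_pos hR n0)) (hN0 n0)
  have hfin : {n | ¬ v n < v N0}.Finite := by
    have := h_conv.eventually (gt_mem_nhds hpos)
    rwa [← Nat.cofinite_eq_atTop, eventually_cofinite] at this
  have hne' : N0 ∈ hfin.toFinset := by simp
  set N := hfin.toFinset.max' ⟨N0, hne'⟩ with hNdef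
  have hNmem : N ∈ hfin.toFinset := hfin.toFinset.max'_mem _
  have hvN : v N = v N0 := le_antisymm (hN0 N) (by simpa using hfin.mem_toFinset.1 hNmem)
  have hcN : c N ≠ 0 := by
    intro h0
    rw [hvdef] at hvN
    simp only [h0, norm_zero, zero_mul] at hvN
    exact absurd hvN.symm (ne_of_gt hpos)
  have hgoal : ∀ n, v n ≤ v N := fun n => hvN ▸ hN0 n
  refine ⟨N, hcN, hgoal, fun n hn => ?_⟩
  have hnot : n ∉ hfin.toFinset := fun hmem => absurd (hfin.toFinset.le_max' n hmem) (not_le.2 hn)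
  have hlt : v n < v N0 := by simpa using (hfin.mem_toFinset.not.1 hnot)
  show v n < v N
  rw [hvN]; exact hlt

private lemma str_norm_add_eq {x y : F} (h : ‖y‖ < ‖x‖) : ‖x + y‖ = ‖x‖ := by
  refine le_antisymm ((IsUltrametricDist.norm_add_le_max x y).trans (max_le le_rfl h.le))
    (le_of_not_gt fun hlt => ?_)
  have h2 : ‖x‖ ≤ max ‖x + y‖ ‖y‖ := by
    simpa using IsUltrametricDist.norm_add_le_max (x + y) (-y)
  exact absurd h2 (not_le.2 (max_lt hlt h))

private lemma str_tsum_lt {u : ℕ → F} {g : ℕ → ℝ} (hb : ∀ n, ‖u n‖ ≤ g n)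
    (hg : Tendsto g atTop (nhds 0)) {ε : ℝ} (h : ∀ n, ‖u n‖ < ε) : ‖∑' n, u n‖ < ε := by
  obtain ⟨K, hK⟩ := str_exists_max (fun n => ‖u n‖) (fun n => norm_nonneg _)
    (squeeze_zero (fun n => norm_nonneg _) hb hg)
  exact lt_of_le_of_lt
    (IsUltrametricDist.norm_tsum_le_of_forall_le_of_nonneg (norm_nonneg _) hK) (h K)

private lemma str_aux (R : ℝ) (hR : 0 < R) :
    ∀ (N : ℕ) (c : ℕ → F),
      Tendsto (fun n => ‖c n‖ * R ^ n) atTop (nhds 0) →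
      (∀ n, ‖c n‖ * R ^ n ≤ ‖c N‖ * R ^ N) →
      (∀ n, N < n → ‖c n‖ * R ^ n < ‖c N‖ * R ^ N) →
      c N ≠ 0 →
      {a : F | ‖a‖ ≤ R ∧ ∑' n : ℕ, c n * a ^ n = 0}.Finite := by
  intro N
  induction N with
  | zero =>
    intro c hconv hle hlt hne
    refine Set.Finite.subset Set.finite_empty fun a ⟨haR, hsum⟩ => ?_
    have hbound : ∀ n, ‖c n * a ^ n‖ ≤ ‖c n‖ * R ^ n := fun n => by
      rw [norm_mul, norm_pow]
      exact mul_le_mul_of_nonneg_left (pow_le_pow_left₀ (norm_nonneg a) haR n) (norm_nonneg _)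
    have hS : Summable fun n => c n * a ^ n := str_summable hbound hconv
    have h0 := Summable.tsum_eq_zero_add hS
    rw [hsum] at h0
    have htail : ‖∑' n : ℕ, c (n + 1) * a ^ (n + 1)‖ < ‖c 0‖ := by
      have hgt : Tendsto (fun n => ‖c (n + 1)‖ * R ^ (n + 1)) atTop (nhds 0) :=
        hconv.comp (tendsto_add_atTop_nat 1)
      refine str_tsum_lt (fun n => hbound (n + 1)) hgt (fun n => ?_)
      have := lt_of_le_of_lt (hbound (n + 1)) (hlt (n + 1) n.succ_pos)
      simpa using this
    have : ‖c 0 * a ^ 0 + ∑' n : ℕ, c (n + 1) * a ^ (n + 1)‖ = ‖c 0‖ := by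
      rw [pow_zero, mul_one]
      exact str_norm_add_eq htail
    rw [← h0, norm_zero] at this
    exact hne (by simpa using this.symm)
  | succ N IH =>
    intro c hconv hle hlt hne
    rcases Set.eq_empty_or_nonempty {a : F | ‖a‖ ≤ R ∧ ∑' n : ℕ, c n * a ^ n = 0} with hZ | hZ
    · rw [hZ]; exact Set.finite_empty
    obtain ⟨a, haR, hφa⟩ := hZ
    have hRpow : ∀ m : ℕ, (0:ℝ) < R ^ m := fun m => pow_pos hR m
    have hbound : ∀ x : F, ‖x‖ ≤ R → ∀ n, ‖c n * x ^ n‖ ≤ ‖c n‖ * R ^ n := fun x hx n => by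
      rw [norm_mul, norm_pow]
      exact mul_le_mul_of_nonneg_left (pow_le_pow_left₀ (norm_nonneg x) hx n) (norm_nonneg _)
    have hterm : ∀ m k : ℕ,
        ‖c (m + 1 + k) * a ^ k‖ ≤ (‖c (m + 1 + k)‖ * R ^ (m + 1 + k)) / R ^ (m + 1) := by
      intro m k
      have heq : (‖c (m + 1 + k)‖ * R ^ (m + 1 + k)) / R ^ (m + 1)
          = ‖c (m + 1 + k)‖ * R ^ k := by
        rw [pow_add]
        field_simp
      rw [heq, norm_mul, norm_pow]
      exact mul_le_mul_of_nonneg_left (pow_le_pow_left₀ (norm_nonneg a) haR k) (norm_nonneg _)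
    have hgm : ∀ m : ℕ, Tendsto (fun k => ‖c (m + 1 + k)‖ * R ^ (m + 1 + k)) atTop (nhds 0) := by
      intro m
      have h1 := hconv.comp (tendsto_add_atTop_nat (m + 1))
      have heq : ∀ k : ℕ, ‖c (k + (m + 1))‖ * R ^ (k + (m + 1))
          = ‖c (m + 1 + k)‖ * R ^ (m + 1 + k) := by
        intro k; rw [add_comm]
      exact Tendsto.congr heq h1
    have hgdiv : ∀ m : ℕ,
        Tendsto (fun k => (‖c (m + 1 + k)‖ * R ^ (m + 1 + k)) / R ^ (m + 1)) atTop (nhds 0) :=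
      fun m => by simpa using (hgm m).div_const (R ^ (m + 1))
    have hbsum : ∀ j : ℕ, Summable fun k => c (j + 1 + k) * a ^ k :=
      fun j => str_summable (hterm j) (hgdiv j)
    set V : ℝ := ‖c (N + 1)‖ * R ^ (N + 1) with hVdef
    have hVpos : 0 < V := mul_pos (norm_pos_iff.2 hne) (hRpow _)
    set b : ℕ → F := fun j => ∑' k : ℕ, c (j + 1 + k) * a ^ k with hbdef
    have hrec : ∀ j : ℕ, b j = c (j + 1) + a * b (j + 1) := by
      intro j
      have h1 := Summable.tsum_eq_zero_add (hbsum j)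
      have h2 : ∀ k : ℕ, c (j + 1 + (k + 1)) * a ^ (k + 1) = a * (c (j + 1 + 1 + k) * a ^ k) := by
        intro k
        have hidx : j + 1 + (k + 1) = j + 1 + 1 + k := by omega
        rw [hidx, pow_succ]; ring
      calc b j = c (j + 1 + 0) * a ^ 0 + ∑' k : ℕ, c (j + 1 + (k + 1)) * a ^ (k + 1) := h1
        _ = c (j + 1) + a * b (j + 1) := by
            rw [tsum_congr h2, tsum_mul_left]
            simp [hbdef]
    have hsa : Summable fun n => c n * a ^ n := str_summable (hbound a haR) hconv
    have hab0 : a * b 0 = -c 0 := by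
      have h0 := Summable.tsum_eq_zero_add hsa
      rw [hφa] at h0
      have h2 : ∀ n : ℕ, c (n + 1) * a ^ (n + 1) = a * (c (0 + 1 + n) * a ^ n) := by
        intro n
        have hidx : (0:ℕ) + 1 + n = n + 1 := by omega
        rw [hidx, pow_succ]; ring
      rw [tsum_congr h2, tsum_mul_left, pow_zero, mul_one] at h0
      have hb0 : b 0 = ∑' n : ℕ, c (0 + 1 + n) * a ^ n := by simp [hbdef]
      rw [← hb0] at h0
      linear_combination -h0
    have hbj_le : ∀ j : ℕ, ‖b j‖ ≤ V / R ^ (j + 1) := by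
      intro j
      simp only [hbdef]
      refine IsUltrametricDist.norm_tsum_le_of_forall_le_of_nonneg (by positivity) (fun k => ?_)
      refine (hterm j k).trans ?_
      gcongr
      exact hle (j + 1 + k)
    have hbj_lt : ∀ j : ℕ, N < j → ‖b j‖ < V / R ^ (j + 1) := by
      intro j hj
      simp only [hbdef]
      refine str_tsum_lt (hterm j) (hgdiv j) (fun k => ?_)
      refine lt_of_le_of_lt (hterm j k) ?_
      gcongr
      exact hlt (j + 1 + k) (by omega)
    have hbN_eq : ‖b N‖ = ‖c (N + 1)‖ := by
      rw [hrec N]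
      refine str_norm_add_eq ?_
      rw [norm_mul]
      have h1 : ‖b (N + 1)‖ < V / R ^ (N + 1 + 1) := hbj_lt (N + 1) (by omega)
      calc ‖a‖ * ‖b (N + 1)‖ ≤ R * ‖b (N + 1)‖ := by
            exact mul_le_mul_of_nonneg_right haR (norm_nonneg _)
        _ < R * (V / R ^ (N + 1 + 1)) := by
            exact mul_lt_mul_of_pos_left h1 hR
        _ = ‖c (N + 1)‖ := by
            rw [hVdef]; field_simp [pow_succ]; ring
    have hbne : b N ≠ 0 := by
      have : (0:ℝ) < ‖b N‖ := by rw [hbN_eq]; exact norm_pos_iff.2 hne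
      exact norm_pos_iff.1 this
    have hVR : ‖b N‖ * R ^ N = V / R := by
      rw [hbN_eq, hVdef, pow_succ]; field_simp
    have hble : ∀ j : ℕ, ‖b j‖ * R ^ j ≤ ‖b N‖ * R ^ N := by
      intro j
      rw [hVR]
      calc ‖b j‖ * R ^ j ≤ (V / R ^ (j + 1)) * R ^ j :=
            mul_le_mul_of_nonneg_right (hbj_le j) (hRpow j).le
        _ = V / R := by rw [pow_succ]; field_simp
    have hblt : ∀ j : ℕ, N < j → ‖b j‖ * R ^ j < ‖b N‖ * R ^ N := by
      intro j hj
      rw [hVR]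
      calc ‖b j‖ * R ^ j < (V / R ^ (j + 1)) * R ^ j :=
            mul_lt_mul_of_pos_right (hbj_lt j hj) (hRpow j)
        _ = V / R := by rw [pow_succ]; field_simp
    have hbconv : Tendsto (fun j => ‖b j‖ * R ^ j) atTop (nhds 0) := by
      rw [Metric.tendsto_atTop]
      intro ε hε
      have hε2 : 0 < ε / 2 * R := by positivity
      obtain ⟨J, hJ⟩ := (Metric.tendsto_atTop.1 hconv) (ε / 2 * R) hε2
      refine ⟨J, fun j hj => ?_⟩
      have hb1 : ‖b j‖ ≤ (ε / 2 * R) / R ^ (j + 1) := by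
        simp only [hbdef]
        refine IsUltrametricDist.norm_tsum_le_of_forall_le_of_nonneg (by positivity) (fun k => ?_)
        refine (hterm j k).trans ?_
        have h3 := hJ (j + 1 + k) (by omega)
        rw [Real.dist_eq, sub_zero, abs_of_nonneg (by positivity)] at h3
        gcongr
      rw [Real.dist_eq, sub_zero, abs_of_nonneg (by positivity)]
      calc ‖b j‖ * R ^ j ≤ ((ε / 2 * R) / R ^ (j + 1)) * R ^ j :=
            mul_le_mul_of_nonneg_right hb1 (hRpow j).le
        _ = ε / 2 := by rw [pow_succ]; field_simp
        _ < ε := by linarith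
    have hfact : ∀ x : F, ‖x‖ ≤ R →
        ∑' n : ℕ, c n * x ^ n = (x - a) * ∑' j : ℕ, b j * x ^ j := by
      intro x hx
      have hsx : Summable fun n => c n * x ^ n := str_summable (hbound x hx) hconv
      have hbxb : ∀ j, ‖b j * x ^ j‖ ≤ ‖b j‖ * R ^ j := fun j => by
        rw [norm_mul, norm_pow]
        exact mul_le_mul_of_nonneg_left (pow_le_pow_left₀ (norm_nonneg x) hx j) (norm_nonneg _)
      have hψ : Summable fun j => b j * x ^ j := str_summable hbxb hbconv
      have hshift : Tendsto (fun j => ‖b (j + 1)‖ * R ^ (j + 1)) atTop (nhds 0) :=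
        hbconv.comp (tendsto_add_atTop_nat 1)
      have hS1 : Summable fun j => b j * x ^ (j + 1) := by
        refine str_summable (g := fun j => (‖b j‖ * R ^ j) * R) (fun j => ?_)
          (by simpa using hbconv.mul_const R)
        have h4 : ‖b j * x ^ (j + 1)‖ ≤ ‖b j‖ * R ^ (j + 1) := by
          rw [norm_mul, norm_pow]
          exact mul_le_mul_of_nonneg_left (pow_le_pow_left₀ (norm_nonneg x) hx _) (norm_nonneg _)
        calc ‖b j * x ^ (j + 1)‖ ≤ ‖b j‖ * R ^ (j + 1) := h4
          _ = ‖b j‖ * R ^ j * R := by rw [pow_succ, mul_assoc]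
      have hS2 : Summable fun j => a * (b (j + 1) * x ^ (j + 1)) := by
        refine str_summable (g := fun j => R * (‖b (j + 1)‖ * R ^ (j + 1))) (fun j => ?_)
          (by simpa using hshift.const_mul R)
        rw [norm_mul]
        refine mul_le_mul haR ?_ (norm_nonneg _) hR.le
        rw [norm_mul, norm_pow]
        exact mul_le_mul_of_nonneg_left (pow_le_pow_left₀ (norm_nonneg x) hx _) (norm_nonneg _)
      have hterm_eq : ∀ j : ℕ,
          c (j + 1) * x ^ (j + 1) = b j * x ^ (j + 1) - a * (b (j + 1) * x ^ (j + 1)) := by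
        intro j
        have hc : c (j + 1) = b j - a * b (j + 1) := by rw [hrec j]; ring
        rw [hc]; ring
      have hsplit : ∑' j : ℕ, c (j + 1) * x ^ (j + 1)
          = (∑' j : ℕ, b j * x ^ (j + 1)) - ∑' j : ℕ, a * (b (j + 1) * x ^ (j + 1)) := by
        rw [tsum_congr hterm_eq]
        exact Summable.tsum_sub hS1 hS2
      have e1 : ∑' j : ℕ, b j * x ^ (j + 1) = x * ∑' j : ℕ, b j * x ^ j := by
        rw [← tsum_mul_left]
        exact tsum_congr fun j => by rw [pow_succ]; ring
      have e2 : ∑' j : ℕ, a * (b (j + 1) * x ^ (j + 1))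
          = a * ((∑' j : ℕ, b j * x ^ j) - b 0) := by
        rw [tsum_mul_left]
        congr 1
        have h3 := Summable.tsum_eq_zero_add hψ
        rw [h3, pow_zero, mul_one]; ring
      rw [Summable.tsum_eq_zero_add hsx, hsplit, e1, e2, pow_zero, mul_one]
      linear_combination hab0
    refine Set.Finite.subset (Set.Finite.insert a (IH b hbconv hble hblt hbne)) ?_
    intro x hx
    obtain ⟨hxR, hx0⟩ := hx
    rcases eq_or_ne x a with rfl | hxa
    · exact Set.mem_insert _ _
    · refine Set.mem_insert_of_mem _ ⟨hxR, ?_⟩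
      have h5 := hfact x hxR
      rw [hx0] at h5
      rcases mul_eq_zero.1 h5.symm with h | h
      · exact absurd h (sub_ne_zero.2 hxa)
      · exact h
end C

/-- Strassmann's theorem: a nonzero power series ∑ cₙ Tⁿ over a complete
ultrametric field whose coefficients satisfy |cₙ|Rⁿ → 0 has only finitely
many zeros in the closed ball of radius R. -/
theorem strassmann
    {F : Type*} [NormedField F] [CompleteSpace F]
    (h_ultra : ∀ x y : F, ‖x + y‖ ≤ max ‖x‖ ‖y‖)
    (R : ℝ) (hR : 0 < R) (c : ℕ → F)
    (h_conv : Tendsto (fun n => ‖c n‖ * R ^ n) atTop (nhds 0))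
    (h_ne : ∃ n, c n ≠ 0) :
    {a : F | ‖a‖ ≤ R ∧ ∑' n : ℕ, c n * a ^ n = 0}.Finite := by
  haveI : IsUltrametricDist F := IsUltrametricDist.isUltrametricDist_of_forall_norm_add_le_max_norm h_ultra
  obtain ⟨N, hN0, hle, hlt⟩ := str_exists_dom R hR c h_conv h_ne
  exact str_aux R hR N c h_conv hle hlt hN0
end
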